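/- Fix a type T. For finite multisets D, D'' of elements of T, let d(D'', D) = |D'' − D| + |D − D''| be the symmetric-difference distance. Let 𝒫 be a finite set, let I : 𝒫 → Multiset T → ℝ be an arbitrary influence function, fix p ∈ 𝒫 and t ∈ ℕ, and define B(p, d; D) = |𝒫| − |{ p̃ ∈ 𝒫 : ∀ D'' with d(D'', D) ≤ d, I(p̃)(D'') < I(p)(D'') }| and ω(p, t; D) = min { d ∈ ℕ : B(p, d; D) ≥ t }. Then for all databases D, D' with d(D, D') ≤ 1 such that the sets { d : B(p, d; D) ≥ t } and { d : B(p, d; D') ≥ t } are both nonempty, ω(p, t; D') ≤ ω(p, t; D) + 1 and ω(p, t; D) ≤ ω(p, t; D') + 1. -/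
import Mathlib


open Classical

lemma multiset_sub_triangle {T : Type*} (A B C : Multiset T) :
    (A - C).card ≤ (A - B).card + (B - C).card := by
  have h : A - C ≤ (A - B) + (B - C) := by
    rw [Multiset.le_iff_count]
    intro x
    simp only [Multiset.count_sub, Multiset.count_add]
    omega
  calc (A - C).card ≤ ((A - B) + (B - C)).card := Multiset.card_le_card h
    _ = (A - B).card + (B - C).card := Multiset.card_add _ _

lemma dist_triangle' {T : Type*} (A B C : Multiset T) :
    (A - C).card + (C - A).card ≤
      ((A - B).card + (B - A).card) + ((B - C).card + (C - B).card) := by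
  have h1 := multiset_sub_triangle A B C
  have h2 := multiset_sub_triangle C B A
  omega

/-- Stability of the branch indicator `ω`: for databases `D, D'` at symmetric-difference
distance at most 1 (and provided both defining sets are nonempty),
`ω(p, t; D') ≤ ω(p, t; D) + 1` and `ω(p, t; D) ≤ ω(p, t; D') + 1`. -/
theorem omega_stability {T α : Type*} [Fintype α]
    (I : α → Multiset T → ℝ) (p : α) (t : ℕ)
    (B : ℕ → Multiset T → ℕ)
    (hB : ∀ (d : ℕ) (D : Multiset T),
      B d D = Fintype.card α -
        (Finset.univ.filter fun q : α =>
          ∀ D'' : Multiset T, (D'' - D).card + (D - D'').card ≤ d → I q D'' < I p D'').card)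
    (ω : Multiset T → ℕ)
    (hω : ∀ D : Multiset T, ω D = sInf {d : ℕ | t ≤ B d D})
    (D D' : Multiset T)
    (hdist : (D - D').card + (D' - D).card ≤ 1)
    (hne : {d : ℕ | t ≤ B d D}.Nonempty) (hne' : {d : ℕ | t ≤ B d D'}.Nonempty) :
    ω D' ≤ ω D + 1 ∧ ω D ≤ ω D' + 1 := by
  have key : ∀ (X Y : Multiset T), (X - Y).card + (Y - X).card ≤ 1 →
      ∀ d : ℕ, B d X ≤ B (d + 1) Y := by
    intro X Y hXY d
    rw [hB, hB]
    have hsub : (Finset.univ.filter fun q : α =>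
        ∀ D'' : Multiset T, (D'' - Y).card + (Y - D'').card ≤ d + 1 → I q D'' < I p D'') ⊆
        (Finset.univ.filter fun q : α =>
        ∀ D'' : Multiset T, (D'' - X).card + (X - D'').card ≤ d → I q D'' < I p D'') := by
      intro q hq
      simp only [Finset.mem_filter, Finset.mem_univ, true_and] at hq ⊢
      intro D'' hD''
      apply hq
      have := dist_triangle' D'' X Y
      omega
    exact Nat.sub_le_sub_left (Finset.card_le_card hsub) _
  have hsym : (D' - D).card + (D - D').card ≤ 1 := by omega
  constructor
  · rw [hω D', hω D]
    apply Nat.sInf_le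
    have hmem : t ≤ B (sInf {d : ℕ | t ≤ B d D}) D := Nat.sInf_mem hne
    exact le_trans hmem (key D D' hdist _)
  · rw [hω D, hω D']
    apply Nat.sInf_le
    have hmem : t ≤ B (sInf {d : ℕ | t ≤ B d D'}) D' := Nat.sInf_mem hne'
    exact le_trans hmem (key D' D hsym _)
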